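/- The Relative Neighborhood Graph of a finite set of points (with distinct pairwise distances) is connected: between any two points there is a path in the RNG. -/

import Mathlib

/-- The Relative Neighborhood Graph of a finite set of points with distinct pairwise
distances is connected. -/
theorem rng_connected {M : Type*} [MetricSpace M] (S : Finset M) (hne : S.Nonempty)
    (hdist : ∀ a ∈ S, ∀ b ∈ S, ∀ c ∈ S, ∀ d ∈ S,
      a ≠ b → c ≠ d → dist a b = dist c d → (a = c ∧ b = d) ∨ (a = d ∧ b = c)) :
    (SimpleGraph.fromRel (fun (x y : {z // z ∈ S}) =>
      ¬ ∃ z ∈ S, z ≠ x.val ∧ z ≠ y.val ∧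
        dist x.val z < dist x.val y.val ∧ dist y.val z < dist x.val y.val)).Connected := by
  set G := SimpleGraph.fromRel (fun (x y : {z // z ∈ S}) =>
      ¬ ∃ z ∈ S, z ≠ x.val ∧ z ≠ y.val ∧
        dist x.val z < dist x.val y.val ∧ dist y.val z < dist x.val y.val) with hG
  have key : ∀ n (u v : {z // z ∈ S}),
      ((S ×ˢ S).filter (fun p => dist p.1 p.2 < dist u.val v.val)).card ≤ n →
      G.Reachable u v := by
    intro n
    induction n with
    | zero =>
      intro u v hm
      by_cases huv : u = v
      · exact huv ▸ SimpleGraph.Reachable.refl u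
      by_cases hE : ∃ z ∈ S, z ≠ u.val ∧ z ≠ v.val ∧
          dist u.val z < dist u.val v.val ∧ dist v.val z < dist u.val v.val
      · obtain ⟨z, hzS, _, _, hz1, _⟩ := hE
        exfalso
        have hmem : (u.val, z) ∈
            (S ×ˢ S).filter (fun p => dist p.1 p.2 < dist u.val v.val) := by
          simp [Finset.mem_filter, Finset.mem_product, u.2, hzS, hz1]
        have := Finset.card_pos.mpr ⟨_, hmem⟩
        omega
      · exact SimpleGraph.Adj.reachable (by
          rw [hG, SimpleGraph.fromRel_adj]
          exact ⟨huv, Or.inl hE⟩)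
    | succ n ih =>
      intro u v hm
      by_cases huv : u = v
      · exact huv ▸ SimpleGraph.Reachable.refl u
      by_cases hE : ∃ z ∈ S, z ≠ u.val ∧ z ≠ v.val ∧
          dist u.val z < dist u.val v.val ∧ dist v.val z < dist u.val v.val
      · obtain ⟨z, hzS, _, _, hz1, hz2⟩ := hE
        set w : {z // z ∈ S} := ⟨z, hzS⟩ with hw
        have hsub1 : (S ×ˢ S).filter (fun p => dist p.1 p.2 < dist u.val w.val) ⊂
            (S ×ˢ S).filter (fun p => dist p.1 p.2 < dist u.val v.val) := by
          constructor
          · intro p hp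
            simp only [Finset.mem_filter] at hp ⊢
            exact ⟨hp.1, hp.2.trans hz1⟩
          · intro h
            have : (u.val, z) ∈
                (S ×ˢ S).filter (fun p => dist p.1 p.2 < dist u.val w.val) :=
              h (by simp [Finset.mem_filter, Finset.mem_product, u.2, hzS, hz1])
            simp [Finset.mem_filter, hw] at this
        have hsub2 : (S ×ˢ S).filter (fun p => dist p.1 p.2 < dist w.val v.val) ⊂
            (S ×ˢ S).filter (fun p => dist p.1 p.2 < dist u.val v.val) := by
          have hz2' : dist w.val v.val < dist u.val v.val := by
            rw [dist_comm]; exact hz2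
          constructor
          · intro p hp
            simp only [Finset.mem_filter] at hp ⊢
            exact ⟨hp.1, hp.2.trans hz2'⟩
          · intro h
            have : (z, v.val) ∈
                (S ×ˢ S).filter (fun p => dist p.1 p.2 < dist w.val v.val) :=
              h (by simp [Finset.mem_filter, Finset.mem_product, v.2, hzS, hz2', (dist_comm z v.val).trans_lt hz2])
            simp [Finset.mem_filter, hw] at this
        have h1 := ih u w (by have := Finset.card_lt_card hsub1; omega)
        have h2 := ih w v (by have := Finset.card_lt_card hsub2; omega)
        exact h1.trans h2
      · exact SimpleGraph.Adj.reachable (by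
          rw [hG, SimpleGraph.fromRel_adj]
          exact ⟨huv, Or.inl hE⟩)
  rw [SimpleGraph.connected_iff]
  obtain ⟨x, hx⟩ := hne
  exact ⟨fun u v => key _ u v le_rfl, ⟨⟨x, hx⟩⟩⟩
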